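/- Let ε > 0 and let μ₀, μ₁ be probability measures on ℝⁿ with finite second moments and means m₀ = ∫x dμ₀(x), m₁ = ∫x dμ₁(x). Let μ̂₀, μ̂₁ be the centered measures obtained as the pushforwards of μ₀, μ₁ under the translations x ↦ x − m₀ and x ↦ x − m₁ respectively. Then OT^ε(μ₀, μ₁) = ‖m₀ − m₁‖² + OT^ε(μ̂₀, μ̂₁). -/

import Mathlib

open MeasureTheory ENNReal Matrix
open scoped Classical

noncomputable section

/-- `EuclideanSpace ℝ (Fin n)`. -/
abbrev E (n : ℕ) := EuclideanSpace ℝ (Fin n)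

/-- Kullback–Leibler divergence, valued in `ℝ≥0∞`. -/
def klDiv {α : Type*} [MeasurableSpace α] (γ ρ : Measure α) : ℝ≥0∞ :=
  if γ ≪ ρ ∧ Integrable (llr γ ρ) γ then ENNReal.ofReal (∫ x, llr γ ρ x ∂γ) else ∞

/-- The set of couplings (transport plans) between `μ` and `ν`. -/
def Couplings {α : Type*} [MeasurableSpace α] (μ ν : Measure α) : Set (Measure (α × α)) :=
  {γ | IsProbabilityMeasure γ ∧ γ.map Prod.fst = μ ∧ γ.map Prod.snd = ν}

/-- The total entropic transport cost of a plan `γ` between `μ` and `ν`: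
`∫ ‖x−y‖² dγ + ε · KL(γ ‖ μ ⊗ ν)`. -/
def entCost {n : ℕ} (ε : ℝ) (μ ν : Measure (E n)) (γ : Measure (E n × E n)) : ℝ≥0∞ :=
  (∫⁻ p, ENNReal.ofReal (‖p.1 - p.2‖ ^ 2) ∂γ) + ENNReal.ofReal ε * klDiv γ (μ.prod ν)

/-- Entropic optimal transport cost `OT^ε(μ, ν)` with cost `‖x−y‖²`. -/
def OTe {n : ℕ} (ε : ℝ) (μ ν : Measure (E n)) : ℝ≥0∞ :=
  ⨅ γ ∈ Couplings μ ν, entCost ε μ ν γ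

/-- The unique symmetric positive semidefinite square root of a positive
semidefinite matrix (junk value `0` otherwise). -/
def sqrtm {n : ℕ} (A : Matrix (Fin n) (Fin n) ℝ) : Matrix (Fin n) (Fin n) ℝ :=
  if h : A.PosSemidef then
    h.1.eigenvectorUnitary.1 * diagonal (Real.sqrt ∘ h.1.eigenvalues) *
      (star h.1.eigenvectorUnitary : Matrix (Fin n) (Fin n) ℝ)
  else 0

/-- Density of the multivariate Gaussian `N(m, K)` on `ℝⁿ`. -/
def gaussianPDF {n : ℕ} (m : E n) (K : Matrix (Fin n) (Fin n) ℝ) (x : E n) : ℝ :=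
  (Real.sqrt ((2 * Real.pi) ^ n * K.det))⁻¹ *
    Real.exp (-(inner ℝ (x - m) (Matrix.toEuclideanLin K⁻¹ (x - m)) : ℝ) / 2)

/-- The multivariate Gaussian measure `N(m, K)` on `ℝⁿ` (with invertible covariance). -/
def gaussian {n : ℕ} (m : E n) (K : Matrix (Fin n) (Fin n) ℝ) : Measure (E n) :=
  volume.withDensity fun x => ENNReal.ofReal (gaussianPDF m K x)

/-- The 2-Sinkhorn divergence `S₂^ε(μ, ν) = OT^ε(μ,ν) − (OT^ε(μ,μ) + OT^ε(ν,ν))/2`. -/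
def Sink {n : ℕ} (ε : ℝ) (μ ν : Measure (E n)) : ℝ :=
  (OTe ε μ ν).toReal - ((OTe ε μ μ).toReal + (OTe ε ν ν).toReal) / 2


/-!
Translating the two marginals by their means maps the couplings of `μ₀, μ₁` bijectively onto
the couplings of the centred measures, and, being a measurable equivalence, it leaves the
relative entropy with respect to the product measure unchanged. For the transport part, the
identity `∫ ‖Z - ∫ Z‖² = ∫ ‖Z‖² - ‖∫ Z‖²` applied to `Z = X - Y`, whose mean is `m₀ - m₁` under
every coupling, shows that the translation lowers `∫ ‖x - y‖² dγ` by exactly `‖m₀ - m₁‖²`.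
-/

open scoped RealInnerProductSpace

section KullbackLeibler

variable {α β : Type*} [MeasurableSpace α] [MeasurableSpace β]

lemma klDiv_map_measurableEquiv (e : α ≃ᵐ β) (γ ρ : Measure α) [SigmaFinite γ] [SigmaFinite ρ] :
    klDiv (γ.map e) (ρ.map e) = klDiv γ ρ := by
  have hac : γ.map e ≪ ρ.map e ↔ γ ≪ ρ :=
    ⟨fun h => by simpa [MeasurableEquiv.map_symm_map] using h.map e.symm.measurable,
      fun h => h.map e.measurable⟩
  by_cases h : γ ≪ ρ
  · have hllr : llr (γ.map e) (ρ.map e) ∘ e =ᵐ[γ] llr γ ρ := by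
      filter_upwards [h.ae_le (e.measurableEmbedding.rnDeriv_map γ ρ)] with x hx
      simp only [Function.comp, llr, hx]
    rw [klDiv, klDiv, hac, e.measurableEmbedding.integrable_map_iff, integrable_congr hllr,
      e.measurableEmbedding.integral_map]
    simp only [← Function.comp_apply (f := llr (γ.map e) (ρ.map e)), integral_congr_ae hllr]
  · rw [klDiv, klDiv, if_neg (fun h' => h (hac.1 h'.1)), if_neg (fun h' => h h'.1)]

end KullbackLeibler

section Couplings

variable {α β : Type*} [MeasurableSpace α] [MeasurableSpace β]

lemma map_prodMap_mem_couplings {μ ν : Measure α} {γ : Measure (α × α)} (hγ : γ ∈ Couplings μ ν)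
    {f g : α → β} (hf : Measurable f) (hg : Measurable g) :
    γ.map (Prod.map f g) ∈ Couplings (μ.map f) (ν.map g) := by
  obtain ⟨hprob, rfl, rfl⟩ := hγ
  refine ⟨Measure.isProbabilityMeasure_map (hf.prodMap hg).aemeasurable, ?_, ?_⟩
  · rw [Measure.map_map measurable_fst (hf.prodMap hg), Measure.map_map hf measurable_fst]
    rfl
  · rw [Measure.map_map measurable_snd (hf.prodMap hg), Measure.map_map hg measurable_snd]
    rfl

lemma couplings_map_measurableEquiv (e₁ e₂ : α ≃ᵐ β) (μ ν : Measure α) :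
    Couplings (μ.map e₁) (ν.map e₂) = (fun γ => γ.map (Prod.map e₁ e₂)) '' Couplings μ ν := by
  ext γ'
  constructor
  · intro hγ'
    refine ⟨γ'.map (Prod.map e₁.symm e₂.symm), ?_, (e₁.prodCongr e₂).map_map_symm⟩
    simpa [MeasurableEquiv.map_symm_map] using
      map_prodMap_mem_couplings hγ' e₁.symm.measurable e₂.symm.measurable
  · rintro ⟨γ, hγ, rfl⟩
    exact map_prodMap_mem_couplings hγ e₁.measurable e₂.measurable

end Couplings

section SecondMoment

variable {Ω F : Type*} [MeasurableSpace Ω] [NormedAddCommGroup F] [InnerProductSpace ℝ F]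
  [CompleteSpace F]

lemma integral_norm_sub_integral_sq {P : Measure Ω} [IsProbabilityMeasure P] {f : Ω → F}
    (hf : MemLp f 2 P) :
    ∫ ω, ‖f ω - ∫ ω', f ω' ∂P‖ ^ 2 ∂P = ∫ ω, ‖f ω‖ ^ 2 ∂P - ‖∫ ω, f ω ∂P‖ ^ 2 := by
  set m := ∫ ω, f ω ∂P
  have hf₁ : Integrable f P := hf.integrable one_le_two
  have hf₂ : Integrable (fun ω => ‖f ω‖ ^ 2) P := hf.integrable_norm_pow two_ne_zero
  have hinner : Integrable (fun ω => 2 * ⟪m, f ω⟫) P := (hf₁.const_inner m).const_mul 2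
  calc ∫ ω, ‖f ω - m‖ ^ 2 ∂P = ∫ ω, (‖f ω‖ ^ 2 - 2 * ⟪m, f ω⟫ + ‖m‖ ^ 2) ∂P := by
        simp_rw [norm_sub_sq_real, real_inner_comm m]
    _ = ∫ ω, ‖f ω‖ ^ 2 ∂P - 2 * ⟪m, m⟫ + ‖m‖ ^ 2 := by
        rw [integral_add (f := fun ω => ‖f ω‖ ^ 2 - 2 * ⟪m, f ω⟫) (hf₂.sub hinner)
            (integrable_const _), integral_sub hf₂ hinner,
          integral_const_mul, integral_inner hf₁, integral_const, probReal_univ, one_smul]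
    _ = ∫ ω, ‖f ω‖ ^ 2 ∂P - ‖m‖ ^ 2 := by
        rw [real_inner_self_eq_norm_sq]
        ring

end SecondMoment

section CouplingMoments

variable {F : Type*} [NormedAddCommGroup F] [MeasurableSpace F] [BorelSpace F]
  [SecondCountableTopology F] {μ ν : Measure F} {γ : Measure (F × F)}

lemma memLp_fst_sub_snd_of_mem_couplings (hγ : γ ∈ Couplings μ ν) (hμ : MemLp id 2 μ)
    (hν : MemLp id 2 ν) : MemLp (fun p : F × F => p.1 - p.2) 2 γ := by
  obtain ⟨-, rfl, rfl⟩ := hγ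
  have h₁ := (memLp_map_measure_iff aestronglyMeasurable_id measurable_fst.aemeasurable).1 hμ
  have h₂ := (memLp_map_measure_iff aestronglyMeasurable_id measurable_snd.aemeasurable).1 hν
  exact h₁.sub h₂

lemma integral_fst_sub_snd_of_mem_couplings [NormedSpace ℝ F] (hγ : γ ∈ Couplings μ ν)
    (hμ : Integrable id μ) (hν : Integrable id ν) :
    ∫ p, p.1 - p.2 ∂γ = ∫ x, x ∂μ - ∫ x, x ∂ν := by
  obtain ⟨-, rfl, rfl⟩ := hγ
  rw [integrable_map_measure aestronglyMeasurable_id measurable_fst.aemeasurable] at hμ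
  rw [integrable_map_measure aestronglyMeasurable_id measurable_snd.aemeasurable] at hν
  rw [integral_map (f := fun x => x) measurable_fst.aemeasurable aestronglyMeasurable_id,
    integral_map (f := fun x => x) measurable_snd.aemeasurable aestronglyMeasurable_id,
    ← integral_sub (f := Prod.fst) (g := Prod.snd) hμ hν]

end CouplingMoments

lemma lintegral_norm_fst_sub_snd_sq_eq_add_map_sub_integral {F : Type*} [NormedAddCommGroup F]
    [InnerProductSpace ℝ F] [CompleteSpace F] [MeasurableSpace F] [BorelSpace F]
    [SecondCountableTopology F] {μ ν : Measure F} [IsFiniteMeasure μ] [IsFiniteMeasure ν]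
    {γ : Measure (F × F)} (hγ : γ ∈ Couplings μ ν) (hμ : MemLp id 2 μ) (hν : MemLp id 2 ν) :
    ∫⁻ p, ENNReal.ofReal (‖p.1 - p.2‖ ^ 2) ∂γ =
      ENNReal.ofReal (‖(∫ x, x ∂μ) - ∫ x, x ∂ν‖ ^ 2) +
        ∫⁻ p, ENNReal.ofReal (‖p.1 - p.2‖ ^ 2)
          ∂(γ.map (Prod.map (· - ∫ x, x ∂μ) (· - ∫ x, x ∂ν))) := by
  have := hγ.1
  have hZ := memLp_fst_sub_snd_of_mem_couplings hγ hμ hν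
  have hmean := integral_fst_sub_snd_of_mem_couplings hγ (hμ.integrable one_le_two)
    (hν.integrable one_le_two)
  have hshift (p : F × F) : (p.1 - ∫ x, x ∂μ) - (p.2 - ∫ x, x ∂ν) =
      (p.1 - p.2) - ∫ q, q.1 - q.2 ∂γ := by
    rw [hmean]; abel
  rw [lintegral_map (by fun_prop) (by fun_prop)]
  simp only [Prod.map_fst, Prod.map_snd, hshift, ← hmean]
  have hZc : Integrable (fun p : F × F => ‖p.1 - p.2 - ∫ q, q.1 - q.2 ∂γ‖ ^ 2) γ :=
    (hZ.sub (memLp_const _)).integrable_norm_pow two_ne_zero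
  rw [← ofReal_integral_eq_lintegral_ofReal (hZ.integrable_norm_pow two_ne_zero)
      (.of_forall fun _ => by positivity),
    ← ofReal_integral_eq_lintegral_ofReal hZc (.of_forall fun _ => by positivity),
    ← ENNReal.ofReal_add (by positivity) (integral_nonneg fun _ => by positivity),
    integral_norm_sub_integral_sq hZ]
  ring_nf

lemma entCost_eq_add_entCost_map_sub_integral {n : ℕ} (ε : ℝ) {μ ν : Measure (E n)}
    [IsFiniteMeasure μ] [IsFiniteMeasure ν] {γ : Measure (E n × E n)} (hγ : γ ∈ Couplings μ ν)
    (hμ : MemLp id 2 μ) (hν : MemLp id 2 ν) :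
    entCost ε μ ν γ =
      ENNReal.ofReal (‖(∫ x, x ∂μ) - ∫ x, x ∂ν‖ ^ 2) +
        entCost ε (μ.map (· - ∫ x, x ∂μ)) (ν.map (· - ∫ x, x ∂ν))
          (γ.map (Prod.map (· - ∫ x, x ∂μ) (· - ∫ x, x ∂ν))) := by
  have := hγ.1
  have hKL : klDiv (γ.map (Prod.map (· - ∫ x, x ∂μ) (· - ∫ x, x ∂ν)))
      ((μ.map (· - ∫ x, x ∂μ)).prod (ν.map (· - ∫ x, x ∂ν))) = klDiv γ (μ.prod ν) := by
    rw [Measure.map_prod_map _ _ (measurable_sub_const _) (measurable_sub_const _)]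
    exact klDiv_map_measurableEquiv
      ((MeasurableEquiv.subRight _).prodCongr (MeasurableEquiv.subRight _)) γ (μ.prod ν)
  rw [entCost, entCost, hKL, lintegral_norm_fst_sub_snd_sq_eq_add_map_sub_integral hγ hμ hν,
    add_assoc]

theorem stmt_1_general {n : ℕ} (ε : ℝ) (μ₀ μ₁ : Measure (E n))
    [IsProbabilityMeasure μ₀] [IsProbabilityMeasure μ₁]
    (h₀ : Integrable (fun x => ‖x‖ ^ 2) μ₀) (h₁ : Integrable (fun x => ‖x‖ ^ 2) μ₁)
    (m₀ m₁ : E n) (hm₀ : m₀ = ∫ x, x ∂μ₀) (hm₁ : m₁ = ∫ x, x ∂μ₁) :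
    OTe ε μ₀ μ₁ =
      ENNReal.ofReal (‖m₀ - m₁‖ ^ 2) +
        OTe ε (μ₀.map fun x => x - m₀) (μ₁.map fun x => x - m₁) := by
  subst hm₀ hm₁
  have hμ₀ : MemLp id 2 μ₀ := (memLp_two_iff_integrable_sq_norm aestronglyMeasurable_id).2 h₀
  have hμ₁ : MemLp id 2 μ₁ := (memLp_two_iff_integrable_sq_norm aestronglyMeasurable_id).2 h₁
  have hC : Couplings (μ₀.map fun x => x - ∫ x, x ∂μ₀) (μ₁.map fun x => x - ∫ x, x ∂μ₁) =
      (fun γ => γ.map (Prod.map (· - ∫ x, x ∂μ₀) (· - ∫ x, x ∂μ₁))) '' Couplings μ₀ μ₁ :=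
    couplings_map_measurableEquiv (MeasurableEquiv.subRight _) (MeasurableEquiv.subRight _) μ₀ μ₁
  rw [OTe, OTe, hC, iInf_image, ENNReal.add_iInf₂]
  exact iInf_congr fun γ => iInf_congr fun hγ =>
    entCost_eq_add_entCost_map_sub_integral ε hγ hμ₀ hμ₁

theorem stmt_1 {n : ℕ} (ε : ℝ) (hε : 0 < ε) (μ₀ μ₁ : Measure (E n))
    [IsProbabilityMeasure μ₀] [IsProbabilityMeasure μ₁]
    (h₀ : Integrable (fun x => ‖x‖ ^ 2) μ₀) (h₁ : Integrable (fun x => ‖x‖ ^ 2) μ₁)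
    (m₀ m₁ : E n) (hm₀ : m₀ = ∫ x, x ∂μ₀) (hm₁ : m₁ = ∫ x, x ∂μ₁) :
    OTe ε μ₀ μ₁ =
      ENNReal.ofReal (‖m₀ - m₁‖ ^ 2) +
        OTe ε (μ₀.map fun x => x - m₀) (μ₁.map fun x => x - m₁) :=
  stmt_1_general ε μ₀ μ₁ h₀ h₁ m₀ m₁ hm₀ hm₁
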